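/- arXiv:2203.16511 — 5 statements merged into one kernel-verified Lean document; each statement's English description precedes it below -/
import Mathlib

section
/- Let $d = \dim \mathcal{H}$ with $0 < d < \infty$, and let $q_1,\ldots,q_d \in [0,1]$. Then $\sum_{k=\lfloor d/2\rfloor+1}^{d} \sum_{\Lambda \subseteq [d], |\Lambda|=k} \prod_{j\in\Lambda} q_j \le (8 \sum_{j=1}^d q_j / d)^{d/2}$. -/
open Finset

theorem superexp_type1_combinatorial_bound (d : ℕ) (hd : 0 < d) (q : Fin d → ℝ)
    (hq : ∀ j, q j ∈ Set.Icc (0:ℝ) 1) :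
    ∑ k ∈ Finset.Icc (d/2+1) d,
      ∑ Λ ∈ Finset.powersetCard k (Finset.univ : Finset (Fin d)), ∏ j ∈ Λ, q j
      ≤ (8 * (∑ j, q j) / d) ^ ((d:ℝ)/2) := by
  have hq0 : ∀ j, 0 ≤ q j := fun j => (hq j).1
  have hq1 : ∀ j, q j ≤ 1 := fun j => (hq j).2
  set S : ℝ := ∑ j, q j with hS
  set n : ℕ := d/2 + 1 with hn
  have hS0 : 0 ≤ S := Finset.sum_nonneg fun j _ => hq0 j
  have hdpos : (0:ℝ) < d := by exact_mod_cast hd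
  have h2n : d < 2*n := by omega
  have h2nR : (d:ℝ) < 2*n := by exact_mod_cast h2n
  have hnd : (d:ℝ)/2 < n := by linarith
  have hnpos : (0:ℝ) < n := by positivity
  have hE0 : ∀ k : ℕ, (0:ℝ) ≤ ∑ Λ ∈ Finset.powersetCard k (Finset.univ : Finset (Fin d)),
      ∏ j ∈ Λ, q j := fun k =>
    Finset.sum_nonneg fun Λ _ => Finset.prod_nonneg fun j _ => hq0 j
  rcases le_or_gt ((d:ℝ)/2) S with hcase | hcase
  · -- big S: LHS ≤ 2^d ≤ RHS
    have hLHS : ∑ k ∈ Finset.Icc n d,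
        ∑ Λ ∈ Finset.powersetCard k (Finset.univ : Finset (Fin d)), ∏ j ∈ Λ, q j
        ≤ (2:ℝ)^d := by
      calc ∑ k ∈ Finset.Icc n d,
          ∑ Λ ∈ Finset.powersetCard k (Finset.univ : Finset (Fin d)), ∏ j ∈ Λ, q j
          ≤ ∑ k ∈ Finset.Icc n d, ((d.choose k : ℕ) : ℝ) := by
            apply Finset.sum_le_sum
            intro k _
            calc ∑ Λ ∈ Finset.powersetCard k (Finset.univ : Finset (Fin d)), ∏ j ∈ Λ, q j
                ≤ ∑ Λ ∈ Finset.powersetCard k (Finset.univ : Finset (Fin d)), (1:ℝ) :=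
                  Finset.sum_le_sum fun Λ _ =>
                    Finset.prod_le_one (fun j _ => hq0 j) (fun j _ => hq1 j)
              _ = ((d.choose k : ℕ) : ℝ) := by
                  simp [Finset.card_powersetCard]
        _ ≤ ∑ k ∈ Finset.range (d+1), ((d.choose k : ℕ) : ℝ) := by
            apply Finset.sum_le_sum_of_subset_of_nonneg
            · intro k hk
              simp only [Finset.mem_Icc] at hk
              simp only [Finset.mem_range]
              omega
            · intro k _ _; positivity
        _ = (2:ℝ)^d := by
            rw [← Nat.cast_sum]
            rw [Nat.sum_range_choose]
            push_cast
            ring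
    refine hLHS.trans ?_
    have h4 : (4:ℝ) ≤ 8 * S / d := by
      rw [le_div_iff₀ hdpos]; linarith
    have h2d : (2:ℝ)^d = (4:ℝ) ^ ((d:ℝ)/2) := by
      have : (4:ℝ) = (2:ℝ) ^ (2:ℝ) := by
        rw [show (2:ℝ) = ((2:ℕ):ℝ) by norm_num, Real.rpow_natCast]; norm_num
      rw [this, ← Real.rpow_natCast 2 d, ← Real.rpow_mul (by norm_num)]
      congr 1
      ring
    rw [h2d]
    exact Real.rpow_le_rpow (by norm_num) h4 (by positivity)
  · rcases hS0.eq_or_lt with hSz | hSpos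
    · -- S = 0
      have hLHS0 : ∑ k ∈ Finset.Icc n d,
          ∑ Λ ∈ Finset.powersetCard k (Finset.univ : Finset (Fin d)), ∏ j ∈ Λ, q j = 0 := by
        apply Finset.sum_eq_zero
        intro k hk
        apply Finset.sum_eq_zero
        intro Λ hΛ
        have hcard : Λ.card = k := (Finset.mem_powersetCard.mp hΛ).2
        have hk1 : 1 ≤ k := by
          simp only [Finset.mem_Icc] at hk; omega
        have hne : Λ.Nonempty := Finset.card_pos.mp (by omega)
        obtain ⟨j, hj⟩ := hne
        have hq0' : q j = 0 := by
          have := (Finset.sum_eq_zero_iff_of_nonneg (fun i _ => hq0 i)).mp hSz.symm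
          exact this j (Finset.mem_univ j)
        exact Finset.prod_eq_zero hj hq0'
      rw [hLHS0]
      positivity
    · -- 0 < S < d/2
      set θ : ℝ := n / S with hθ
      have hθ1 : 1 ≤ θ := by
        rw [hθ, le_div_iff₀ hSpos]; linarith
      have hθpos : 0 < θ := lt_of_lt_of_le one_pos hθ1
      have hθS : θ * S = n := by
        rw [hθ]; field_simp
      -- key: θ^n * LHS ≤ exp n
      have key : θ^n * (∑ k ∈ Finset.Icc n d,
          ∑ Λ ∈ Finset.powersetCard k (Finset.univ : Finset (Fin d)), ∏ j ∈ Λ, q j)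
          ≤ Real.exp n := by
        calc θ^n * (∑ k ∈ Finset.Icc n d,
            ∑ Λ ∈ Finset.powersetCard k (Finset.univ : Finset (Fin d)), ∏ j ∈ Λ, q j)
            = ∑ k ∈ Finset.Icc n d, θ^n *
              ∑ Λ ∈ Finset.powersetCard k (Finset.univ : Finset (Fin d)), ∏ j ∈ Λ, q j := by
              rw [Finset.mul_sum]
          _ ≤ ∑ k ∈ Finset.Icc n d, θ^k *
              ∑ Λ ∈ Finset.powersetCard k (Finset.univ : Finset (Fin d)), ∏ j ∈ Λ, q j := by
              apply Finset.sum_le_sum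
              intro k hk
              have hnk : n ≤ k := (Finset.mem_Icc.mp hk).1
              exact mul_le_mul_of_nonneg_right (pow_le_pow_right₀ hθ1 hnk) (hE0 k)
          _ ≤ ∑ k ∈ Finset.range (d+1), θ^k *
              ∑ Λ ∈ Finset.powersetCard k (Finset.univ : Finset (Fin d)), ∏ j ∈ Λ, q j := by
              apply Finset.sum_le_sum_of_subset_of_nonneg
              · intro k hk
                simp only [Finset.mem_Icc] at hk
                simp only [Finset.mem_range]
                omega
              · intro k _ _
                exact mul_nonneg (by positivity) (hE0 k)
          _ = ∏ j, (θ * q j + 1) := by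
              rw [Finset.prod_add]
              rw [Finset.sum_powerset]
              rw [Finset.card_univ, Fintype.card_fin]
              apply Finset.sum_congr rfl
              intro k _
              rw [Finset.mul_sum]
              apply Finset.sum_congr rfl
              intro Λ hΛ
              have hcard : Λ.card = k := (Finset.mem_powersetCard.mp hΛ).2
              rw [Finset.prod_mul_distrib, Finset.prod_const, hcard]
              simp [mul_comm]
          _ ≤ ∏ j, Real.exp (θ * q j) := by
              apply Finset.prod_le_prod
              · intro j _
                have := hq0 j
                nlinarith
              · intro j _
                linarith [Real.add_one_le_exp (θ * q j)]
          _ = Real.exp (θ * S) := by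
              rw [← Real.exp_sum, hS, Finset.mul_sum]
          _ = Real.exp n := by rw [hθS]
      have hLHSle : ∑ k ∈ Finset.Icc n d,
          ∑ Λ ∈ Finset.powersetCard k (Finset.univ : Finset (Fin d)), ∏ j ∈ Λ, q j
          ≤ (S/n)^n * Real.exp n := by
        have hθn : (0:ℝ) < θ^n := by positivity
        rw [← mul_le_mul_iff_of_pos_left hθn]
        refine key.trans ?_
        have : θ^n * ((S/n)^n * Real.exp n) = (θ * (S/n))^n * Real.exp n := by
          rw [mul_pow]; ring
        rw [this, hθ]
        have : (n:ℝ)/S * (S/n) = 1 := by field_simp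
        rw [this, one_pow, one_mul]
      refine hLHSle.trans ?_
      -- analytic step : (S/n)^n * exp n ≤ (8S/d)^(d/2)
      have hQ : (0:ℝ) < 8 * S / d := by positivity
      have hP : (0:ℝ) < (S/n)^n * Real.exp n := by positivity
      rw [← Real.exp_log hP, ← Real.exp_log (Real.rpow_pos_of_pos hQ _)]
      apply Real.exp_le_exp.mpr
      rw [Real.log_rpow hQ]
      rw [Real.log_mul (by positivity) (Real.exp_ne_zero _), Real.log_pow, Real.log_exp,
        Real.log_div (ne_of_gt hSpos) (ne_of_gt hnpos)]
      have l8 : Real.log (8 * S / d) = 3 * Real.log 2 + Real.log S - Real.log d := by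
        rw [Real.log_div (by positivity) (ne_of_gt hdpos),
          Real.log_mul (by norm_num) (ne_of_gt hSpos),
          show (8:ℝ) = 2^(3:ℕ) by norm_num, Real.log_pow]
        push_cast; ring
      rw [l8]
      -- endgame with linarith
      have f1 : Real.log S ≤ Real.log d - Real.log 2 := by
        have : Real.log S ≤ Real.log ((d:ℝ)/2) := Real.log_le_log hSpos (le_of_lt hcase)
        rwa [Real.log_div (ne_of_gt hdpos) (by norm_num)] at this
      have f2 : Real.log d - Real.log 2 - Real.log n ≤ (d:ℝ)/(2*n) - 1 := by
        have hpos : (0:ℝ) < (d:ℝ)/(2*n) := by positivity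
        have h := Real.log_le_sub_one_of_pos hpos
        rw [Real.log_div (ne_of_gt hdpos) (by positivity),
          Real.log_mul (by norm_num) (ne_of_gt hnpos)] at h
        linarith
      have f3 : (0.6931471803:ℝ) < Real.log 2 := Real.log_two_gt_d9
      have h1 : 0 ≤ ((n:ℝ) - (d:ℝ)/2) * ((Real.log d - Real.log 2) - Real.log S) :=
        mul_nonneg (by linarith) (by linarith)
      have h2 : (n:ℝ) * (Real.log d - Real.log 2 - Real.log n) ≤ (d:ℝ)/2 - n := by
        have := mul_le_mul_of_nonneg_left f2 (le_of_lt hnpos)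
        have hne : (n:ℝ) * ((d:ℝ)/(2*n) - 1) = (d:ℝ)/2 - n := by
          field_simp
        linarith [this, hne ▸ this]
      have f3d : (d:ℝ) * 0.6931471803 ≤ (d:ℝ) * Real.log 2 :=
        mul_le_mul_of_nonneg_left (le_of_lt f3) (le_of_lt hdpos)
      nlinarith [h1, h2, f3d, hdpos]
end

section
/- Let $d \ge 1$ and $r_1,\ldots,r_d \in [0,1]$. Then $\sum_{k=0}^{\lfloor d/2\rfloor} \sum_{\Lambda \subseteq [d], |\Lambda|=k} \prod_{j\in [d]\setminus\Lambda} (1-r_j) \le (8 \sum_{j=1}^d (1-r_j) / d)^{d/2}$. -/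
/-!
Write `s j = 1 - r j ∈ [0, 1]` and `S = ∑ j, s j`. Every product in the sum runs over at least
`d / 2` of the `s j`, so it is at most `1` and, by AM-GM, at most `(2 S / d) ^ (d / 2)`; hence at
most `u ^ (d / 2)` with `u = min 1 (2 S / d)`. There are at most `2 ^ d = 4 ^ (d / 2)` products,
and `4 u ≤ 8 S / d`.
-/

open Finset

theorem Finset.prod_le_sum_div_card_pow {ι : Type*} (s : Finset ι) {z : ι → ℝ}
    (hz : ∀ i ∈ s, 0 ≤ z i) : ∏ i ∈ s, z i ≤ ((∑ i ∈ s, z i) / #s) ^ #s := by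
  rcases s.eq_empty_or_nonempty with rfl | hs
  · simp
  have hmean := Real.geom_mean_le_arith_mean s (fun _ ↦ 1) z (fun _ _ ↦ zero_le_one)
    (by simpa using hs) hz
  simp only [Real.rpow_one, sum_const, nsmul_eq_mul, mul_one, one_mul] at hmean
  calc ∏ i ∈ s, z i = ((∏ i ∈ s, z i) ^ ((#s : ℝ)⁻¹)) ^ #s :=
        (Real.rpow_inv_natCast_pow (prod_nonneg hz) hs.card_pos.ne').symm
    _ ≤ ((∑ i ∈ s, z i) / #s) ^ #s := by
        gcongr
        exact Real.rpow_nonneg (prod_nonneg hz) _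

theorem Finset.prod_le_min_one_div_rpow {ι : Type*} {s : Finset ι} {z : ι → ℝ} {σ c : ℝ}
    (hz : ∀ i ∈ s, z i ∈ Set.Icc (0 : ℝ) 1) (hσ : ∑ i ∈ s, z i ≤ σ) (hc : 0 ≤ c)
    (hcs : c ≤ #s) : ∏ i ∈ s, z i ≤ min 1 (σ / c) ^ c := by
  have hprod_le_one : ∏ i ∈ s, z i ≤ 1 :=
    prod_le_one (fun i hi ↦ (hz i hi).1) (fun i hi ↦ (hz i hi).2)
  rcases hc.eq_or_lt with rfl | hc
  · simpa using hprod_le_one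
  have hsum : 0 ≤ ∑ i ∈ s, z i := sum_nonneg fun i hi ↦ (hz i hi).1
  have hu : 0 ≤ min 1 (σ / c) := le_min zero_le_one (div_nonneg (hsum.trans hσ) hc.le)
  calc ∏ i ∈ s, z i ≤ min 1 (σ / c) ^ #s := by
        rcases min_choice 1 (σ / c) with h | h <;> rw [h]
        · simpa using hprod_le_one
        · exact (s.prod_le_sum_div_card_pow fun i hi ↦ (hz i hi).1).trans <|
            pow_le_pow_left₀ (div_nonneg hsum (Nat.cast_nonneg _)) (div_le_div₀ (hsum.trans hσ)
              hσ hc hcs) _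
    _ = min 1 (σ / c) ^ (#s : ℝ) := (Real.rpow_natCast _ _).symm
    _ ≤ min 1 (σ / c) ^ c := Real.rpow_le_rpow_of_exponent_ge' hu (min_le_left _ _) hc.le hcs

theorem Nat.sum_range_choose_le_two_pow (n m : ℕ) : ∑ k ∈ range m, n.choose k ≤ 2 ^ n := by
  calc ∑ k ∈ range m, n.choose k ≤ ∑ k ∈ range (m + (n + 1)), n.choose k :=
        sum_le_sum_of_subset (range_subset_range.mpr (by omega))
    _ = ∑ k ∈ range (n + 1), n.choose k := by
        refine (sum_subset (range_subset_range.mpr (by omega)) fun k _ hk ↦ ?_).symm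
        exact Nat.choose_eq_zero_of_lt (by simpa using hk)
    _ = 2 ^ n := Nat.sum_range_choose n

theorem Finset.sum_range_sum_powersetCard_le {α : Type*} (s : Finset α) (m : ℕ)
    {f : Finset α → ℝ} {B : ℝ} (hB : 0 ≤ B) (hf : ∀ t ⊆ s, #t ≤ m → f t ≤ B) :
    ∑ k ∈ range (m + 1), ∑ t ∈ powersetCard k s, f t ≤ 2 ^ #s * B := by
  calc ∑ k ∈ range (m + 1), ∑ t ∈ powersetCard k s, f t
      ≤ ∑ k ∈ range (m + 1), ((#s).choose k : ℝ) * B := by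
        refine sum_le_sum fun k hk ↦ ?_
        rw [← card_powersetCard, ← nsmul_eq_mul]
        refine sum_le_card_nsmul _ _ _ fun t ht ↦ ?_
        rw [mem_powersetCard] at ht
        exact hf t ht.1 (ht.2 ▸ Nat.lt_succ_iff.mp (mem_range.mp hk))
    _ = (∑ k ∈ range (m + 1), ((#s).choose k : ℝ)) * B := (sum_mul ..).symm
    _ ≤ 2 ^ #s * B := by
        gcongr
        exact_mod_cast Nat.sum_range_choose_le_two_pow _ _

theorem Real.four_rpow_half_natCast (n : ℕ) : (4 : ℝ) ^ ((n : ℝ) / 2) = 2 ^ n := by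
  rw [show (4 : ℝ) = 2 ^ (2 : ℝ) by norm_num, ← Real.rpow_mul zero_le_two,
    mul_div_cancel₀ _ two_ne_zero, Real.rpow_natCast]

theorem superexp_type2_combinatorial_bound_general (d : ℕ) (r : Fin d → ℝ)
    (hr : ∀ j, r j ∈ Set.Icc (0:ℝ) 1) :
    ∑ k ∈ Finset.range (d/2+1),
      ∑ Λ ∈ Finset.powersetCard k (Finset.univ : Finset (Fin d)),
        ∏ j ∈ Finset.univ \ Λ, (1 - r j)
      ≤ (8 * (∑ j, (1 - r j)) / d) ^ ((d:ℝ)/2) := by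
  set S := ∑ j, (1 - r j)
  set u := min 1 (S / ((d : ℝ) / 2))
  have hs : ∀ j, 1 - r j ∈ Set.Icc (0 : ℝ) 1 := fun j ↦
    ⟨by linarith [(hr j).2], by linarith [(hr j).1]⟩
  have hS : 0 ≤ S := sum_nonneg fun j _ ↦ (hs j).1
  have hu : 0 ≤ u := le_min zero_le_one (by positivity)
  have hterm : ∀ Λ ⊆ univ, #Λ ≤ d / 2 → ∏ j ∈ univ \ Λ, (1 - r j) ≤ u ^ ((d : ℝ) / 2) := by
    intro Λ _ hΛ
    refine prod_le_min_one_div_rpow (fun j _ ↦ hs j)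
      (sum_le_univ_sum_of_nonneg fun j ↦ (hs j).1) (by positivity) ?_
    rw [card_univ_sdiff, Fintype.card_fin, Nat.cast_sub (card_le_univ Λ |>.trans_eq
      (Fintype.card_fin d)), le_sub_iff_add_le]
    have hΛ_real : (#Λ : ℝ) ≤ (d / 2 : ℕ) := by exact_mod_cast hΛ
    linarith [Nat.cast_div_le (α := ℝ) (m := d) (n := 2)]
  calc _ ≤ 2 ^ d * u ^ ((d : ℝ) / 2) := by
        simpa using sum_range_sum_powersetCard_le univ (d / 2) (by positivity) hterm
    _ = (4 * u) ^ ((d : ℝ) / 2) := by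
        rw [Real.mul_rpow zero_le_four hu, Real.four_rpow_half_natCast]
    _ ≤ (8 * S / d) ^ ((d : ℝ) / 2) := by
        refine Real.rpow_le_rpow (by positivity) ?_ (by positivity)
        calc 4 * u ≤ 4 * (S / ((d : ℝ) / 2)) := by gcongr; exact min_le_right _ _
          _ = 8 * S / d := by ring

theorem superexp_type2_combinatorial_bound (d : ℕ) (hd : 1 ≤ d) (r : Fin d → ℝ)
    (hr : ∀ j, r j ∈ Set.Icc (0:ℝ) 1) :
    ∑ k ∈ Finset.range (d/2+1),
      ∑ Λ ∈ Finset.powersetCard k (Finset.univ : Finset (Fin d)),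
        ∏ j ∈ Finset.univ \ Λ, (1 - r j)
      ≤ (8 * (∑ j, (1 - r j)) / d) ^ ((d:ℝ)/2) :=
  superexp_type2_combinatorial_bound_general d r hr
end

section
/- Let $\hat a : [0,2\pi) \to [0,\infty)$ be a bounded measurable function and let $A = \mathcal{F}^{-1} M_{\hat a} \mathcal{F}$ be the corresponding translation-invariant bounded operator on $\ell^2(\mathbb{Z})$, where $\mathcal{F}$ is the Fourier transform unitary $\ell^2(\mathbb{Z}) \to L^2([0,2\pi))$ and $M_{\hat a}$ is multiplication by $\hat a$. If for some $n \in \mathbb{N}$ the compression $V_n^* A V_n$ to the span of $\{\mathbf{1}_{\{0\}},\ldots,\mathbf{1}_{\{n-1\}}\}$ has $0$ as an eigenvalue, then $\hat a = 0$ almost everywhere. -/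
open MeasureTheory Finset

/-- Lebesgue measure restricted to `[0, 2π)`. -/
noncomputable def μ2π : Measure ℝ := volume.restrict (Set.Ico 0 (2 * Real.pi))

/-- The canonical embedding of `ℂ^{⟨n⟩}` into `ℓ²(ℤ)`. -/
noncomputable def Vemb (n : ℕ) (ψ : Fin n → ℂ) : lp (fun _ : ℤ => ℂ) 2 :=
  ∑ j : Fin n, ψ j • lp.single 2 (j : ℤ) (1 : ℂ)

/-- The `n×n` compression matrix `(V_n^* A V_n)_{j,l} = ⟨1_{j}, A 1_{l}⟩`. -/
noncomputable def compressMat (A : lp (fun _ : ℤ => ℂ) 2 →L[ℂ] lp (fun _ : ℤ => ℂ) 2)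
    (n : ℕ) : Matrix (Fin n) (Fin n) ℂ :=
  fun j l => inner ℂ (lp.single 2 (j : ℤ) (1 : ℂ)) (A (lp.single 2 (l : ℤ) (1 : ℂ)))

/-!
For a kernel vector `ψ` of the compression put `v = V_n ψ`. Then
`0 = ⟪ψ, V_n^* A V_n ψ⟫ = ⟪F v, â · F v⟫ = ∫ â |F v|²`, so `â = 0` a.e. off the zero set of `F v`.
But `F v = ∑ ψ_j e^{ijx} / √(2π)` is real-analytic and, as `F` and `V_n` are injective, not
a.e. zero; by the identity theorem its zeros are then discrete, hence a null set.
-/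

open Matrix

theorem Vemb_apply (n : ℕ) (ψ : Fin n → ℂ) (j : Fin n) : Vemb n ψ j = ψ j := by
  rw [Vemb, lp.coeFn_sum]
  simp [lp.single_apply, Pi.single_apply, Fin.val_inj]

theorem Vemb_ne_zero {n : ℕ} {ψ : Fin n → ℂ} (hψ : ψ ≠ 0) : Vemb n ψ ≠ 0 := fun h =>
  hψ (funext fun j => by rw [← Vemb_apply n ψ j, h]; rfl)

theorem inner_Vemb_apply_Vemb (A : lp (fun _ : ℤ => ℂ) 2 →L[ℂ] lp (fun _ : ℤ => ℂ) 2)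
    (n : ℕ) (ψ : Fin n → ℂ) :
    inner ℂ (Vemb n ψ) (A (Vemb n ψ)) = star ψ ⬝ᵥ compressMat A n *ᵥ ψ := by
  simp only [Vemb, map_sum, map_smul, sum_inner, inner_sum, inner_smul_left, inner_smul_right,
    mulVec, dotProduct, compressMat, mul_sum, Pi.star_apply, RCLike.star_def]
  exact sum_comm.trans (sum_congr rfl fun i _ => sum_congr rfl fun j _ => by ring)

theorem coeFn_map_Vemb {α E : Type*} [MeasurableSpace α] {μ : Measure α}
    [NormedAddCommGroup E] [NormedSpace ℂ E] {p : ENNReal}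
    (F : lp (fun _ : ℤ => ℂ) 2 →ₗ[ℂ] Lp E p μ) (e : ℤ → α → E)
    (hF : ∀ k : ℤ, F (lp.single 2 k (1 : ℂ)) =ᵐ[μ] e k) (n : ℕ) (ψ : Fin n → ℂ) :
    F (Vemb n ψ) =ᵐ[μ] fun x => ∑ j : Fin n, ψ j • e j x := by
  have hsmul : ∀ᵐ x ∂μ, ∀ j : Fin n, (ψ j • F (lp.single 2 (j : ℤ) (1 : ℂ)) : Lp E p μ) x
      = ψ j • e j x := by
    refine ae_all_iff.2 fun j => ?_
    filter_upwards [Lp.coeFn_smul (ψ j) (F (lp.single 2 (j : ℤ) (1 : ℂ))), hF j] with x hx hx'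
    rw [hx, Pi.smul_apply, hx']
  simp only [Vemb, map_sum, map_smul]
  filter_upwards [Lp.coeFn_fun_finsetSum univ fun j : Fin n =>
    ψ j • F (lp.single 2 (j : ℤ) (1 : ℂ)), hsmul] with x hx hx'
  rw [hx]
  exact sum_congr rfl fun j _ => hx' j

theorem Differentiable.analyticOnNhd_comp_ofReal {E : Type*} [NormedAddCommGroup E]
    [NormedSpace ℂ E] [CompleteSpace E] {f : ℂ → E} (hf : Differentiable ℂ f) :
    AnalyticOnNhd ℝ (fun x : ℝ => f x) Set.univ := fun x _ =>
  (hf.analyticAt (x : ℂ)).restrictScalars.comp (Complex.ofRealCLM.analyticAt x)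

theorem AnalyticOnNhd.ae_eq_zero_or_ae_ne_zero {E : Type*} [NormedAddCommGroup E]
    [NormedSpace ℝ E] {f : ℝ → E} (hf : AnalyticOnNhd ℝ f Set.univ) (μ : Measure ℝ)
    [NullSingletonClass μ] : f =ᵐ[μ] 0 ∨ ∀ᵐ x ∂μ, f x ≠ 0 := by
  refine (hf.eqOn_zero_or_eventually_ne_zero_of_preconnected isPreconnected_univ).imp
    (fun h => Filter.Eventually.of_forall fun x => h (Set.mem_univ x)) fun h => ?_
  have := ae_restrict_le_codiscreteWithin (μ := μ) MeasurableSet.univ h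
  rwa [Measure.restrict_univ] at this

theorem ae_eq_zero_or_eq_zero_of_inner_eq_zero {α : Type*} [MeasurableSpace α] {μ : Measure α}
    {a : α → ℝ} (ha : 0 ≤ᵐ[μ] a) {f g : Lp ℂ 2 μ} (hg : g =ᵐ[μ] fun x => a x * f x)
    (hfg : inner ℂ f g = 0) : ∀ᵐ x ∂μ, a x = 0 ∨ f x = 0 := by
  have hpointwise :
      (fun x => inner ℂ (f x) (g x)) =ᵐ[μ] fun x => ((a x * ‖f x‖ ^ 2 : ℝ) : ℂ) := by
    filter_upwards [hg] with x hx
    rw [hx, RCLike.inner_apply, mul_assoc, Complex.mul_conj']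
    push_cast
    ring
  have hint : Integrable (fun x => a x * ‖f x‖ ^ 2) μ := by
    simpa only [RCLike.re_to_complex, Complex.ofReal_re] using
      ((L2.integrable_inner f g).congr hpointwise).re
  have hzero : ∫ x, a x * ‖f x‖ ^ 2 ∂μ = 0 := by
    rw [L2.inner_def, integral_congr_ae hpointwise, integral_complex_ofReal] at hfg
    exact_mod_cast hfg
  have hnonneg : 0 ≤ᵐ[μ] fun x => a x * ‖f x‖ ^ 2 := by
    filter_upwards [ha] with x hx using mul_nonneg hx (sq_nonneg _)
  filter_upwards [(integral_eq_zero_iff_of_nonneg_ae hnonneg hint).1 hzero] with x hx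
  simpa using hx

instance : NullSingletonClass μ2π := Measure.restrict.instNullSingletonClass _

theorem zero_eigenvalue_of_compression_implies_symbol_ae_zero_general
    (a : ℝ → ℝ) (ha_nonneg : ∀ x, 0 ≤ a x)
    (F : lp (fun _ : ℤ => ℂ) 2 ≃ₗᵢ[ℂ] Lp ℂ 2 μ2π)
    (hF : ∀ k : ℤ, (F (lp.single 2 k (1 : ℂ)) : ℝ → ℂ)
      =ᵐ[μ2π] fun x => Complex.exp (Complex.I * k * x) / Real.sqrt (2 * Real.pi))
    (A : lp (fun _ : ℤ => ℂ) 2 →L[ℂ] lp (fun _ : ℤ => ℂ) 2)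
    (hA : ∀ ψ, (F (A ψ) : ℝ → ℂ) =ᵐ[μ2π] fun x => (a x : ℂ) * (F ψ : ℝ → ℂ) x)
    (n : ℕ)
    (heig : ∃ ψ : Fin n → ℂ, ψ ≠ 0 ∧ (compressMat A n).mulVec ψ = 0) :
    a =ᵐ[μ2π] 0 := by
  obtain ⟨ψ, hψ, hker⟩ := heig
  let P : ℂ → ℂ := fun z =>
    ∑ j : Fin n, ψ j • (Complex.exp (Complex.I * (j : ℤ) * z) / Real.sqrt (2 * Real.pi))
  have hFψ : F (Vemb n ψ) =ᵐ[μ2π] fun x : ℝ => P x :=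
    coeFn_map_Vemb F.toLinearEquiv.toLinearMap _ hF n ψ
  have hform : inner ℂ (F (Vemb n ψ)) (F (A (Vemb n ψ))) = 0 := by
    rw [F.inner_map_map, inner_Vemb_apply_Vemb, hker, dotProduct_zero]
  have hsymbol := ae_eq_zero_or_eq_zero_of_inner_eq_zero (.of_forall ha_nonneg) (hA _) hform
  have hP_analytic : AnalyticOnNhd ℝ (fun x : ℝ => P x) Set.univ :=
    Differentiable.analyticOnNhd_comp_ofReal (by fun_prop)
  have hP : ∀ᵐ x : ℝ ∂μ2π, P x ≠ 0 :=
    (hP_analytic.ae_eq_zero_or_ae_ne_zero μ2π).resolve_left fun hP0 =>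
      Vemb_ne_zero hψ (F.map_eq_zero_iff.1 (Lp.eq_zero_iff_ae_eq_zero.2 (hFψ.trans hP0)))
  filter_upwards [hsymbol, hFψ, hP] with x hx hFx hPx
  exact hx.resolve_right (hFx ▸ hPx)

theorem zero_eigenvalue_of_compression_implies_symbol_ae_zero
    (a : ℝ → ℝ) (ha_meas : Measurable a) (ha_nonneg : ∀ x, 0 ≤ a x)
    (ha_bdd : ∃ C, ∀ x, a x ≤ C)
    (F : lp (fun _ : ℤ => ℂ) 2 ≃ₗᵢ[ℂ] Lp ℂ 2 μ2π)
    (hF : ∀ k : ℤ, (F (lp.single 2 k (1 : ℂ)) : ℝ → ℂ)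
      =ᵐ[μ2π] fun x => Complex.exp (Complex.I * k * x) / Real.sqrt (2 * Real.pi))
    (A : lp (fun _ : ℤ => ℂ) 2 →L[ℂ] lp (fun _ : ℤ => ℂ) 2)
    (hA : ∀ ψ, (F (A ψ) : ℝ → ℂ) =ᵐ[μ2π] fun x => (a x : ℂ) * (F ψ : ℝ → ℂ) x)
    (n : ℕ) (hn : 1 ≤ n)
    (heig : ∃ ψ : Fin n → ℂ, ψ ≠ 0 ∧ (compressMat A n).mulVec ψ = 0) :
    a =ᵐ[μ2π] 0 :=
  zero_eigenvalue_of_compression_implies_symbol_ae_zero_general a ha_nonneg F hF A hA n heig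
end

section
/- Let $\hat a : [0,2\pi) \to [0,1]$ be measurable and constant equal to $c$ on some interval $[\alpha, \omega] \subseteq [0,2\pi)$. Then for every $0 < \delta < (\omega - \alpha)/2$ and every $x \in [\alpha + \delta, \omega - \delta]$, the Cesàro mean satisfies $|(\widehat S_n \hat a)(x) - c| \le \frac{1}{n \sin^2(\delta/2)}$. -/
open MeasureTheory Finset

/-- The `n`-th Cesàro (Fejér) mean of the Fourier series of `a` at `x`. -/
noncomputable def cesaroMean (n : ℕ) (a : ℝ → ℝ) (x : ℝ) : ℂ :=
  ∑ m ∈ Finset.Icc (-(n : ℤ) + 1) ((n : ℤ) - 1),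
    (((((n : ℝ) - abs (m : ℝ)) / n : ℝ)) : ℂ) *
      Complex.exp (Complex.I * m * x) *
      ((1 / (2 * (Real.pi : ℂ))) * ∫ t, Complex.exp (-Complex.I * m * t) * (a t : ℂ) ∂μ2π)

/-!
Write the Fejér mean as a convolution, `cesaroMean n a x = (2π)⁻¹ ∫ K_n (x - t) a(t) dt`, with
`K_n(y) = n⁻¹ |∑_{k<n} e^{iky}|²`. Since `K_n` has mean one, the error at `x` is
`(2π)⁻¹ ∫ K_n (x - t) (a(t) - c) dt`, whose integrand vanishes on `[α, ω]`. Off that interval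
`|sin((x - t)/2)| ≥ sin(δ/2)`, and summing the geometric series gives
`K_n(x - t) ≤ 1 / (n sin²((x - t)/2))`, while `|a - c| ≤ 1`.
-/

open scoped Real

section GeomSum

variable {K : Type*} [Field K] {z : K}

lemma pow_mul_geom_sum_inv (hz : z ≠ 0) (n : ℕ) :
    z ^ n * ∑ k ∈ range n, z⁻¹ ^ k = z * ∑ k ∈ range n, z ^ k := by
  induction n with
  | zero => simp
  | succ n ih =>
    have hzn : z ^ n * z⁻¹ ^ n = 1 := by rw [← mul_pow, mul_inv_cancel₀ hz, one_pow]
    rw [sum_range_succ, mul_add, pow_succ', mul_assoc, ih, sum_range_succ']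
    simp only [pow_succ', ← mul_sum]
    linear_combination z * hzn

lemma sum_Icc_neg_zpow (hz : z ≠ 0) (n : ℕ) :
    ∑ m ∈ Icc (-(n : ℤ)) n, z ^ m =
      z * ∑ k ∈ range n, z ^ k + z⁻¹ * ∑ k ∈ range n, z⁻¹ ^ k + 1 := by
  induction n with
  | zero => simp
  | succ n ih =>
    have hIcc : Icc (-((n + 1 : ℕ) : ℤ)) (n + 1 : ℕ) =
        insert (-((n + 1 : ℕ) : ℤ)) (insert ((n : ℤ) + 1) (Icc (-(n : ℤ)) n)) := by
      ext m; simp only [mem_Icc, mem_insert]; omega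
    rw [hIcc, sum_insert (by simp only [mem_insert, mem_Icc]; omega), sum_insert (by simp), ih,
      zpow_neg, zpow_natCast, zpow_add_one₀ hz, zpow_natCast, sum_range_succ, sum_range_succ,
      ← inv_pow]
    ring

theorem sum_Icc_sub_natAbs_mul_zpow (hz : z ≠ 0) (n : ℕ) :
    ∑ m ∈ Icc (-(n : ℤ) + 1) (n - 1), ((n : K) - m.natAbs) * z ^ m =
      (∑ k ∈ range n, z ^ k) * ∑ k ∈ range n, z⁻¹ ^ k := by
  induction n with
  | zero => simp
  | succ n ih =>
    have hvanish : ∑ m ∈ Icc (-(n : ℤ)) n, ((n : K) - m.natAbs) * z ^ m =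
        ∑ m ∈ Icc (-(n : ℤ) + 1) (n - 1), ((n : K) - m.natAbs) * z ^ m := by
      refine (sum_subset (Icc_subset_Icc (by omega) (by omega)) fun m hm hm' => ?_).symm
      simp only [mem_Icc] at hm hm'
      rw [show m.natAbs = n by omega, sub_self, zero_mul]
    have hzn : z ^ n * z⁻¹ ^ n = 1 := by rw [← mul_pow, mul_inv_cancel₀ hz, one_pow]
    have hsymm := pow_mul_geom_sum_inv (inv_ne_zero hz) n
    rw [inv_inv] at hsymm
    calc _ = ∑ m ∈ Icc (-(n : ℤ)) n, (((n : K) - m.natAbs) * z ^ m + z ^ m) := by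
            refine sum_congr (by congr 1 <;> push_cast <;> ring) fun m _ => ?_
            push_cast; ring
      _ = _ := by
            rw [sum_add_distrib, hvanish, ih, sum_Icc_neg_zpow hz, sum_range_succ, sum_range_succ,
              ← pow_mul_geom_sum_inv hz, ← hsymm]
            linear_combination -hzn

end GeomSum

lemma norm_geom_sum_mul_norm_sub_one_le {𝕜 : Type*} [NormedDivisionRing 𝕜] {w : 𝕜}
    (hw : ‖w‖ = 1) (n : ℕ) : ‖∑ k ∈ range n, w ^ k‖ * ‖w - 1‖ ≤ 2 := by
  calc ‖∑ k ∈ range n, w ^ k‖ * ‖w - 1‖ = ‖w ^ n - 1‖ := by rw [← norm_mul, geom_sum_mul]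
    _ ≤ ‖w ^ n‖ + ‖(1 : 𝕜)‖ := norm_sub_le _ _
    _ = 2 := by rw [norm_pow, hw, one_pow, norm_one, one_add_one_eq_two]

lemma sin_sq_half_le_sin_sq_half {δ y : ℝ} (hδ : 0 ≤ δ) (h₁ : δ ≤ |y|)
    (h₂ : |y| ≤ 2 * π - δ) : Real.sin (δ / 2) ^ 2 ≤ Real.sin (y / 2) ^ 2 := by
  have hcos : Real.cos |y| ≤ Real.cos δ := by
    rcases le_total |y| π with hy | hy
    · exact Real.cos_le_cos_of_nonneg_of_le_pi hδ hy h₁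
    · rw [← Real.cos_two_pi_sub]
      exact Real.cos_le_cos_of_nonneg_of_le_pi hδ (by linarith) (by linarith)
  rw [Real.sin_sq_eq_half_sub, Real.sin_sq_eq_half_sub, mul_div_cancel₀ _ two_ne_zero,
    mul_div_cancel₀ _ two_ne_zero, ← Real.cos_abs y]
  linarith

lemma abs_sub_mem_Icc_of_notMem_Icc {α ω δ x t : ℝ} (hα : 0 ≤ α) (hω : ω < 2 * π) (hδ : 0 ≤ δ)
    (hx : x ∈ Set.Icc (α + δ) (ω - δ)) (ht : t ∈ Set.Ico 0 (2 * π)) (hta : t ∉ Set.Icc α ω) :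
    |x - t| ∈ Set.Icc δ (2 * π - δ) := by
  obtain ⟨hx₁, hx₂⟩ := hx
  obtain ⟨ht₀, ht₂⟩ := ht
  simp only [Set.mem_Icc, not_and_or, not_le] at hta
  rcases hta with h | h
  · rw [abs_of_pos (by linarith)]; constructor <;> linarith
  · rw [abs_of_neg (by linarith)]; constructor <;> linarith

lemma measureReal_μ2π_univ : μ2π.real Set.univ = 2 * π := by
  rw [μ2π, measureReal_restrict_apply_univ, Real.volume_real_Ico_of_le (by positivity), sub_zero]

instance : IsFiniteMeasure μ2π := by
  rw [μ2π]; infer_instance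

open Complex

noncomputable def fejerKernel (n : ℕ) (y : ℝ) : ℂ :=
  ∑ m ∈ Icc (-(n : ℤ) + 1) ((n : ℤ) - 1), ((((n : ℝ) - |(m : ℝ)|) / n : ℝ) : ℂ) * exp (I * m * y)

lemma fejerKernel_eq_inv_mul_geom_sum_mul (n : ℕ) (y : ℝ) :
    fejerKernel n y = (n : ℂ)⁻¹ * ((∑ k ∈ range n, exp (I * y) ^ k) *
      ∑ k ∈ range n, (exp (I * y))⁻¹ ^ k) := by
  rw [← sum_Icc_sub_natAbs_mul_zpow (exp_ne_zero _), mul_sum, fejerKernel]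
  refine sum_congr rfl fun m _ => ?_
  have habs : |(m : ℝ)| = (m.natAbs : ℝ) := by rw [Nat.cast_natAbs, Int.cast_abs]
  rw [← exp_int_mul, habs]
  push_cast
  ring_nf

lemma natCast_mul_sin_sq_mul_norm_fejerKernel_le (n : ℕ) (y : ℝ) :
    n * Real.sin (y / 2) ^ 2 * ‖fejerKernel n y‖ ≤ 1 := by
  rcases eq_or_ne n 0 with rfl | hn
  · simp
  rw [fejerKernel_eq_inv_mul_geom_sum_mul, norm_mul, norm_mul, norm_inv, Complex.norm_natCast,
    ← sq_abs (Real.sin _)]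
  set w := exp (I * y)
  have hw : ‖w‖ = 1 := norm_exp_I_mul_ofReal y
  have hw_inv : w⁻¹ = exp (I * (-y : ℝ)) := by rw [← exp_neg]; push_cast; ring_nf
  have hsub : ‖w - 1‖ = 2 * |Real.sin (y / 2)| := by
    rw [norm_exp_I_mul_ofReal_sub_one, norm_mul, Real.norm_two, Real.norm_eq_abs]
  have hsub_inv : ‖w⁻¹ - 1‖ = 2 * |Real.sin (y / 2)| := by
    rw [hw_inv, norm_exp_I_mul_ofReal_sub_one, norm_mul, Real.norm_two, Real.norm_eq_abs,
      neg_div, Real.sin_neg, abs_neg]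
  have h := mul_le_mul (norm_geom_sum_mul_norm_sub_one_le hw n)
    (norm_geom_sum_mul_norm_sub_one_le (w := w⁻¹) (by rw [norm_inv, hw, inv_one]) n)
    (by positivity) zero_le_two
  rw [hsub, hsub_inv] at h
  have hn' : (n : ℝ) ≠ 0 := by positivity
  calc _ = ‖∑ k ∈ range n, w ^ k‖ * (2 * |Real.sin (y / 2)|) *
        (‖∑ k ∈ range n, w⁻¹ ^ k‖ * (2 * |Real.sin (y / 2)|)) / 4 := by field_simp; ring
    _ ≤ 1 := by linarith

lemma norm_fejerKernel_le {n : ℕ} (hn : n ≠ 0) {s y : ℝ} (hs : 0 < s)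
    (hsy : s ≤ Real.sin (y / 2) ^ 2) : ‖fejerKernel n y‖ ≤ 1 / (n * s) := by
  rw [le_div_iff₀ (by positivity)]
  calc ‖fejerKernel n y‖ * (n * s) ≤ n * Real.sin (y / 2) ^ 2 * ‖fejerKernel n y‖ := by
        rw [mul_comm]; gcongr
    _ ≤ 1 := natCast_mul_sin_sq_mul_norm_fejerKernel_le n y

lemma norm_exp_neg_I_mul_intCast_mul_ofReal (m : ℤ) (t : ℝ) : ‖exp (-I * m * t)‖ = 1 := by
  simp [norm_exp, mul_re]

lemma integrable_exp_neg_I_mul_ofReal (m : ℤ) {a : ℝ → ℝ} (ha : Integrable a μ2π) :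
    Integrable (fun t : ℝ => exp (-I * m * t) * (a t : ℂ)) μ2π :=
  ha.ofReal.bdd_mul (by fun_prop)
    (ae_of_all _ fun t => (norm_exp_neg_I_mul_intCast_mul_ofReal m t).le)

lemma integral_exp_neg_I_mul_intCast (m : ℤ) :
    ∫ t, exp (-I * m * t) ∂μ2π = if m = 0 then 2 * (π : ℂ) else 0 := by
  split_ifs with hm
  · simp [hm, integral_const, measureReal_μ2π_univ]
  have hc : -I * m ≠ 0 := mul_ne_zero (neg_ne_zero.mpr I_ne_zero) (Int.cast_ne_zero.mpr hm)
  have hperiod : exp (-I * m * (2 * π)) = 1 := by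
    rw [show -I * m * (2 * π) = (-m : ℤ) * (2 * π * I) by push_cast; ring,
      exp_int_mul_two_pi_mul_I]
  rw [μ2π, integral_Ico_eq_integral_Ioo, ← integral_Ioc_eq_integral_Ioo,
    ← intervalIntegral.integral_of_le (by positivity), integral_exp_mul_complex hc]
  push_cast
  rw [hperiod]
  simp

lemma cesaroMean_const {n : ℕ} (hn : n ≠ 0) (c x : ℝ) : cesaroMean n (fun _ => c) x = c := by
  have hcoeff (m : ℤ) : ∫ t, exp (-I * m * t) * (c : ℂ) ∂μ2π =
      (if m = 0 then 2 * (π : ℂ) else 0) * c := by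
    rw [integral_mul_const, integral_exp_neg_I_mul_intCast]
  rw [cesaroMean, sum_eq_single_of_mem 0 (by simp only [mem_Icc]; omega)]
  · have hπ : (π : ℂ) ≠ 0 := ofReal_ne_zero.mpr Real.pi_ne_zero
    rw [hcoeff, if_pos rfl]
    simp only [Int.cast_zero, abs_zero, sub_zero, div_self (Nat.cast_ne_zero.mpr hn : (n : ℝ) ≠ 0),
      ofReal_one, mul_zero, zero_mul, exp_zero, one_mul]
    field_simp
  · intro m _ hm
    simp only [hcoeff, hm, if_false, zero_mul, mul_zero]

lemma cesaroMean_sub (n : ℕ) {a b : ℝ → ℝ} (ha : Integrable a μ2π) (hb : Integrable b μ2π)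
    (x : ℝ) : cesaroMean n (fun t => a t - b t) x = cesaroMean n a x - cesaroMean n b x := by
  rw [cesaroMean, cesaroMean, cesaroMean, ← sum_sub_distrib]
  refine sum_congr rfl fun m _ => ?_
  rw [← mul_sub, ← mul_sub, ← integral_sub (integrable_exp_neg_I_mul_ofReal m ha)
    (integrable_exp_neg_I_mul_ofReal m hb)]
  simp only [ofReal_sub, mul_sub]

lemma cesaroMean_eq_integral_fejerKernel (n : ℕ) {a : ℝ → ℝ} (ha : Integrable a μ2π) (x : ℝ) :
    cesaroMean n a x = 1 / (2 * (π : ℂ)) * ∫ t, fejerKernel n (x - t) * a t ∂μ2π := by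
  have hterm (m : ℤ) (t : ℝ) :
      ((((n : ℝ) - |(m : ℝ)|) / n : ℝ) : ℂ) * exp (I * m * ((x - t : ℝ) : ℂ)) * a t =
        ((((n : ℝ) - |(m : ℝ)|) / n : ℝ) : ℂ) * exp (I * m * x) * (exp (-I * m * t) * a t) := by
    rw [show I * m * ((x - t : ℝ) : ℂ) = I * m * x + -I * m * t by push_cast; ring, exp_add]
    ring
  simp only [fejerKernel, sum_mul, hterm]
  rw [integral_finsetSum _ fun m _ => (integrable_exp_neg_I_mul_ofReal m ha).const_mul _,
    mul_sum, cesaroMean]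
  refine sum_congr rfl fun m _ => ?_
  rw [integral_const_mul]
  ring

lemma norm_one_div_two_pi_mul_integral_le {f : ℝ → ℂ} {C : ℝ} (h : ∀ᵐ t ∂μ2π, ‖f t‖ ≤ C) :
    ‖1 / (2 * (π : ℂ)) * ∫ t, f t ∂μ2π‖ ≤ C := by
  have hnorm : ‖1 / (2 * (π : ℂ))‖ = 1 / (2 * π) := by simp [abs_of_pos Real.pi_pos]
  calc _ ≤ 1 / (2 * π) * (C * (2 * π)) := by
        rw [norm_mul, hnorm, ← measureReal_μ2π_univ]
        exact mul_le_mul_of_nonneg_left (norm_integral_le_of_norm_le_const h) (by positivity)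
    _ = C := by field_simp

theorem fejer_mean_bound_on_constancy_interval
    (a : ℝ → ℝ) (ha_meas : Measurable a) (ha01 : ∀ x, a x ∈ Set.Icc (0:ℝ) 1)
    (α ω c : ℝ) (hα : 0 ≤ α) (hω : ω < 2 * Real.pi)
    (hconst : ∀ x ∈ Set.Icc α ω, a x = c)
    (δ : ℝ) (hδ0 : 0 < δ) (hδ : δ < (ω - α) / 2)
    (x : ℝ) (hx : x ∈ Set.Icc (α + δ) (ω - δ))
    (n : ℕ) (hn : 1 ≤ n) :
    ‖cesaroMean n a x - (c : ℂ)‖ ≤ 1 / (n * Real.sin (δ / 2) ^ 2) := by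
  have hsin : 0 < Real.sin (δ / 2) := Real.sin_pos_of_pos_of_lt_pi (by linarith) (by linarith)
  obtain ⟨hc₀, hc₁⟩ : c ∈ Set.Icc (0 : ℝ) 1 := hconst α ⟨le_rfl, by linarith⟩ ▸ ha01 α
  have ha_int : Integrable a μ2π := .of_bound ha_meas.aestronglyMeasurable 1 <| ae_of_all _
    fun t => by rw [Real.norm_of_nonneg (ha01 t).1]; exact (ha01 t).2
  rw [← cesaroMean_const (by omega : n ≠ 0) c x, ← cesaroMean_sub n ha_int (integrable_const c),
    cesaroMean_eq_integral_fejerKernel n (a := fun t => a t - c) (ha_int.sub (integrable_const c))]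
  refine norm_one_div_two_pi_mul_integral_le ?_
  rw [μ2π, ae_restrict_iff' measurableSet_Ico]
  refine ae_of_all _ fun t ht => ?_
  by_cases hta : t ∈ Set.Icc α ω
  · rw [hconst t hta, sub_self, ofReal_zero, mul_zero, norm_zero]
    positivity
  obtain ⟨hdist₁, hdist₂⟩ := abs_sub_mem_Icc_of_notMem_Icc hα hω hδ0.le hx ht hta
  have hac : ‖((a t - c : ℝ) : ℂ)‖ ≤ 1 := by
    rw [norm_real, Real.norm_eq_abs, abs_le]
    constructor <;> linarith [(ha01 t).1, (ha01 t).2]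
  rw [norm_mul, ← mul_one (1 / _)]
  exact mul_le_mul (norm_fejerKernel_le (by omega) (by positivity)
    (sin_sq_half_le_sin_sq_half hδ0.le hdist₁ hdist₂)) hac (norm_nonneg _) (by positivity)
end

section
/- Let $d \ge 1$ and let $\rho = \bigotimes_{j=1}^d \begin{pmatrix} 1-q_j & 0 \\ 0 & q_j\end{pmatrix}$ be a product density matrix on $(\mathbb{C}^2)^{\otimes d}$ with $q_j \in [0,1]$, and let $S$ be the orthogonal projection onto the span of computational basis vectors with Hamming weight at most $\lfloor d/2 \rfloor$. Then $\mathrm{Tr}\,\rho(I - S) \le (8 \sum_j q_j / d)^{d/2}$. -/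
open Finset Matrix

section Aux
open Real

theorem type1_error_bound' (d : ℕ) (hd : 1 ≤ d) (q : Fin d → ℝ)
    (hq : ∀ j, q j ∈ Set.Icc (0:ℝ) 1) :
    (Matrix.diagonal (fun x : Fin d → Fin 2 => ∏ j, if x j = 1 then q j else 1 - q j) *
      (1 - Matrix.diagonal (fun x : Fin d → Fin 2 =>
        if (∑ j, (x j : ℕ)) ≤ d / 2 then (1:ℝ) else 0))).trace
      ≤ (8 * (∑ j, q j) / d) ^ ((d : ℝ) / 2) := by
  have hq0 : ∀ j, 0 ≤ q j := fun j => (hq j).1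
  have hq1 : ∀ j, q j ≤ 1 := fun j => (hq j).2
  set Q := ∑ j, q j with hQdef
  have hQ0 : 0 ≤ Q := Finset.sum_nonneg fun j _ => hq0 j
  have hd0 : (0:ℝ) < d := by exact_mod_cast hd
  set w : Fin d → Fin 2 → ℝ := fun j b => if b = 1 then q j else 1 - q j with hw
  have hw0 : ∀ j b, 0 ≤ w j b := by
    intro j b; simp only [hw]; split <;> [exact hq0 j; linarith [hq1 j]]
  have hwprod : ∀ x : Fin d → Fin 2, 0 ≤ ∏ j, w j (x j) :=
    fun x => Finset.prod_nonneg fun j _ => hw0 j (x j)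
  set m : ℕ := d / 2 + 1 with hm
  have htr : (Matrix.diagonal (fun x : Fin d → Fin 2 => ∏ j, if x j = 1 then q j else 1 - q j) *
      (1 - Matrix.diagonal (fun x : Fin d → Fin 2 =>
        if (∑ j, (x j : ℕ)) ≤ d / 2 then (1:ℝ) else 0))).trace
      = ∑ x : Fin d → Fin 2, (∏ j, w j (x j)) *
          (if (∑ j, (x j : ℕ)) ≤ d / 2 then (0:ℝ) else 1) := by
    rw [← Matrix.diagonal_one, Matrix.diagonal_sub, Matrix.diagonal_mul_diagonal,
      Matrix.trace_diagonal]
    refine Finset.sum_congr rfl fun x _ => ?_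
    split_ifs <;> ring
  rw [htr]
  rcases eq_or_lt_of_le hQ0 with hQz | hQpos
  · -- Q = 0
    have hqz : ∀ j, q j = 0 := by
      intro j
      have := (Finset.sum_eq_zero_iff_of_nonneg (fun j _ => hq0 j)).mp hQz.symm
      exact this j (Finset.mem_univ j)
    have hL : ∑ x : Fin d → Fin 2, (∏ j, w j (x j)) *
        (if (∑ j, (x j : ℕ)) ≤ d / 2 then (0:ℝ) else 1) = 0 := by
      refine Finset.sum_eq_zero fun x _ => ?_
      by_cases hc : (∑ j, (x j : ℕ)) ≤ d / 2
      · simp [hc]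
      · have hne : (∑ j, (x j : ℕ)) ≠ 0 := by omega
        obtain ⟨j, -, hj⟩ := Finset.exists_ne_zero_of_sum_ne_zero hne
        have hxj : x j = 1 := by omega
        have : w j (x j) = 0 := by simp [hw, hxj, hqz j]
        rw [Finset.prod_eq_zero (Finset.mem_univ j) this, zero_mul]
    rw [hL, ← hQz]
    rw [show (8 * (0:ℝ) / d) = 0 by ring, Real.zero_rpow (by positivity)]
  · rcases le_or_gt 1 (8 * Q / d) with hr | hr
    · -- trivial case: RHS ≥ 1
      have hL1 : ∑ x : Fin d → Fin 2, (∏ j, w j (x j)) *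
          (if (∑ j, (x j : ℕ)) ≤ d / 2 then (0:ℝ) else 1) ≤ 1 := by
        have h1 : ∑ x : Fin d → Fin 2, (∏ j, w j (x j)) *
            (if (∑ j, (x j : ℕ)) ≤ d / 2 then (0:ℝ) else 1)
            ≤ ∑ x : Fin d → Fin 2, ∏ j, w j (x j) := by
          refine Finset.sum_le_sum fun x _ => ?_
          split_ifs <;> simp [hwprod x]
        have h2 : ∑ x : Fin d → Fin 2, ∏ j, w j (x j) = ∏ j, ∑ b, w j b :=
          (Fintype.prod_sum w).symm
        have h3 : ∀ j, ∑ b, w j b = 1 := by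
          intro j; rw [Fin.sum_univ_two]; simp [hw]
        rw [h2] at h1; simp only [h3, Finset.prod_const_one] at h1
        exact h1
      refine hL1.trans ?_
      exact Real.one_le_rpow hr (by positivity)
    · -- main case : 0 < Q, 8Q/d < 1
      set t : ℝ := d / (2 * Q) with ht
      have ht0 : 0 < t := by positivity
      have ht1 : 1 ≤ t := by
        rw [ht, le_div_iff₀ (by positivity)]
        have : 8 * Q / d < 1 := hr
        rw [div_lt_one hd0] at this
        linarith
      have step1 : ∑ x : Fin d → Fin 2, (∏ j, w j (x j)) *
          (if (∑ j, (x j : ℕ)) ≤ d / 2 then (0:ℝ) else 1)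
          ≤ ∑ x : Fin d → Fin 2, (∏ j, w j (x j)) * t ^ (∑ j, (x j : ℕ)) / t ^ m := by
        refine Finset.sum_le_sum fun x _ => ?_
        by_cases hc : (∑ j, (x j : ℕ)) ≤ d / 2
        · simp only [hc, if_true, mul_zero]
          exact div_nonneg (mul_nonneg (hwprod x) (by positivity)) (by positivity)
        · simp only [hc, if_false, mul_one]
          have hmle : m ≤ ∑ j, (x j : ℕ) := by omega
          have : t ^ m ≤ t ^ (∑ j, (x j : ℕ)) := pow_le_pow_right₀ ht1 hmle
          rw [le_div_iff₀ (by positivity)]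
          calc (∏ j, w j (x j)) * t ^ m ≤ (∏ j, w j (x j)) * t ^ (∑ j, (x j : ℕ)) :=
                mul_le_mul_of_nonneg_left this (hwprod x)
            _ = (∏ j, w j (x j)) * t ^ (∑ j, (x j : ℕ)) := rfl
      have step2 : ∑ x : Fin d → Fin 2, (∏ j, w j (x j)) * t ^ (∑ j, (x j : ℕ))
          = ∏ j, (1 - q j + q j * t) := by
        have key : ∀ x : Fin d → Fin 2, (∏ j, w j (x j)) * t ^ (∑ j, (x j : ℕ))
            = ∏ j, (w j (x j) * t ^ ((x j : ℕ))) := by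
          intro x
          rw [Finset.prod_mul_distrib, Finset.prod_pow_eq_pow_sum]
        simp_rw [key]
        rw [← Fintype.prod_sum (fun j b => w j b * t ^ ((b : ℕ)))]
        refine Finset.prod_congr rfl fun j _ => ?_
        rw [Fin.sum_univ_two]
        simp [hw]
      have step3 : ∏ j, (1 - q j + q j * t) ≤ Real.exp (Q * (t - 1)) := by
        have : ∏ j, (1 - q j + q j * t) ≤ ∏ j, Real.exp (q j * (t - 1)) := by
          refine Finset.prod_le_prod (fun j _ => by nlinarith [hq0 j, hq1 j]) fun j _ => ?_
          have := Real.add_one_le_exp (q j * (t - 1))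
          linarith
        refine this.trans ?_
        rw [← Real.exp_sum, ← Finset.sum_mul]
      have hQt : Q * t = d / 2 := by
        rw [ht]; field_simp
      have step4 : Real.exp (Q * (t - 1)) ≤ Real.exp ((d:ℝ) / 2) := by
        apply Real.exp_le_exp.mpr
        nlinarith
      have hdm : (d:ℝ) / 2 ≤ (m : ℕ) := by
        have : d < 2 * m := by omega
        have : (d:ℝ) < 2 * m := by exact_mod_cast this
        linarith
      have step5 : Real.exp ((d:ℝ)/2) ≤ Real.exp 1 ^ m := by
        rw [Real.exp_one_pow]
        exact Real.exp_le_exp.mpr hdm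
      have hrt : Real.exp 1 / t ≤ 8 * Q / d := by
        rw [div_le_iff₀ ht0]
        have h4 : 8 * Q / ↑d * t = 4 := by
          rw [ht]; field_simp; ring
        rw [h4]
        have := Real.exp_one_lt_d9
        linarith
      calc ∑ x : Fin d → Fin 2, (∏ j, w j (x j)) *
            (if (∑ j, (x j : ℕ)) ≤ d / 2 then (0:ℝ) else 1)
          ≤ ∑ x : Fin d → Fin 2, (∏ j, w j (x j)) * t ^ (∑ j, (x j : ℕ)) / t ^ m := step1
        _ = (∑ x : Fin d → Fin 2, (∏ j, w j (x j)) * t ^ (∑ j, (x j : ℕ))) / t ^ m := by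
            rw [Finset.sum_div]
        _ ≤ Real.exp 1 ^ m / t ^ m := by
            gcongr
            rw [step2]
            exact step3.trans (step4.trans step5)
        _ = (Real.exp 1 / t) ^ m := (div_pow _ _ _).symm
        _ ≤ (8 * Q / d) ^ m := pow_le_pow_left₀ (by positivity) hrt m
        _ = (8 * Q / d) ^ ((m : ℕ) : ℝ) := (Real.rpow_natCast _ m).symm
        _ ≤ (8 * Q / d) ^ ((d : ℝ) / 2) := by
            exact Real.rpow_le_rpow_of_exponent_ge (by positivity) hr.le hdm

end Aux

/-- Product density matrix `⊗_j diag(1-q_j, q_j)` on `(ℂ²)^{⊗ d}` (diagonal in the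
computational basis indexed by `Fin d → Fin 2`). -/
noncomputable def prodDensity (d : ℕ) (q : Fin d → ℝ) :
    Matrix (Fin d → Fin 2) (Fin d → Fin 2) ℝ :=
  Matrix.diagonal (fun x => ∏ j, if x j = 1 then q j else 1 - q j)

/-- Projection onto computational basis vectors of Hamming weight at most `⌊d/2⌋`. -/
noncomputable def lowWeightProj (d : ℕ) :
    Matrix (Fin d → Fin 2) (Fin d → Fin 2) ℝ :=
  Matrix.diagonal (fun x => if (∑ j, (x j : ℕ)) ≤ d / 2 then 1 else 0)

theorem type1_error_bound (d : ℕ) (hd : 1 ≤ d) (q : Fin d → ℝ)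
    (hq : ∀ j, q j ∈ Set.Icc (0:ℝ) 1) :
    (prodDensity d q * (1 - lowWeightProj d)).trace
      ≤ (8 * (∑ j, q j) / d) ^ ((d : ℝ) / 2) := by
  simpa only [prodDensity, lowWeightProj] using type1_error_bound' d hd q hq
end
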